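/- arXiv:1607.04548 — 2 statements merged into one kernel-verified Lean document; each statement's English description precedes it below -/
import Mathlib

section
/- Let G=(V,E) be a locally finite graph with symmetric positive edge weights, μ(x) ≥ μ_min > 0, h satisfying (H1) and (H2), and f satisfying (F1) and (F2) with f(x,s)=0 for s ≤ 0. Then the functional J(u) = (1/2)‖u‖_ℋ² − ∫_V F(x,u)dμ satisfies the Palais–Smale condition at every level c ∈ ℝ: if (u_k) ⊂ ℋ satisfies J(u_k) → c and J'(u_k) → 0 (i.e. sup over ‖φ‖_ℋ ≤ 1 of |⟨u_k,φ⟩_ℋ − ∫_V f(x,u_k)φ dμ| → 0), then some subsequence of (u_k) converges strongly in ℋ. -/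
open Filter Topology

namespace GraphNLE

variable {V : Type*}

/-- Integral of `g` over `V` w.r.t. the measure `μ`: `∫_V g dμ = Σ_x μ(x) g(x)`. -/
noncomputable def intV (μ g : V → ℝ) : ℝ := ∑' x, μ x * g x

/-- The graph (μ-)Laplacian: `Δu(x) = (1/μ(x)) Σ_{y} w_{xy} (u(y)-u(x))`. -/
noncomputable def lap (w : V → V → ℝ) (μ u : V → ℝ) (x : V) : ℝ :=
  (1 / μ x) * ∑' y, w x y * (u y - u x)

/-- Squared length of the gradient: `|∇u|²(x) = (1/(2μ(x))) Σ_y w_{xy} (u(y)-u(x))²`. -/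
noncomputable def gradSq (w : V → V → ℝ) (μ u : V → ℝ) (x : V) : ℝ :=
  (1 / (2 * μ x)) * ∑' y, w x y * (u y - u x) ^ 2

/-- The gradient form `Γ(u,v)(x) = (1/(2μ(x))) Σ_y w_{xy} (u(y)-u(x))(v(y)-v(x))`. -/
noncomputable def gamma (w : V → V → ℝ) (μ u v : V → ℝ) (x : V) : ℝ :=
  (1 / (2 * μ x)) * ∑' y, w x y * (u y - u x) * (v y - v x)

/-- Membership in `W^{1,2}(V)`: finite `∫(|∇u|² + u²) dμ`. -/
def memW (w : V → V → ℝ) (μ u : V → ℝ) : Prop :=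
  Summable (fun x => μ x * gradSq w μ u x) ∧ Summable (fun x => μ x * u x ^ 2)

/-- The `W^{1,2}` norm `(∫_V (|∇u|² + u²) dμ)^{1/2}`. -/
noncomputable def normW (w : V → V → ℝ) (μ u : V → ℝ) : ℝ :=
  Real.sqrt (intV μ fun x => gradSq w μ u x + u x ^ 2)

/-- Membership in the space `ℋ`: finite `∫(|∇u|² + h u²) dμ`. -/
def memH (w : V → V → ℝ) (μ h u : V → ℝ) : Prop :=
  Summable (fun x => μ x * gradSq w μ u x) ∧ Summable (fun x => μ x * (h x * u x ^ 2))

/-- The norm of `ℋ`: `‖u‖_ℋ = (∫_V (|∇u|² + h u²) dμ)^{1/2}`. -/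
noncomputable def normH (w : V → V → ℝ) (μ h u : V → ℝ) : ℝ :=
  Real.sqrt (intV μ fun x => gradSq w μ u x + h x * u x ^ 2)

/-- The inner product of `ℋ`: `⟨u,v⟩_ℋ = ∫_V (Γ(u,v) + h u v) dμ`. -/
noncomputable def innerH (w : V → V → ℝ) (μ h u v : V → ℝ) : ℝ :=
  intV μ fun x => gamma w μ u v x + h x * u x * v x

/-- `λ₁ = inf { ∫(|∇u|² + h u²) dμ : u ∈ ℋ, ∫ u² dμ = 1 }`. -/
noncomputable def lambda1 (w : V → V → ℝ) (μ h : V → ℝ) : ℝ :=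
  sInf {t : ℝ | ∃ u : V → ℝ, memH w μ h u ∧ intV μ (fun x => u x ^ 2) = 1 ∧
    intV μ (fun x => gradSq w μ u x + h x * u x ^ 2) = t}

/-- The primitive `F(x,s) = ∫_0^s f(x,t) dt`. -/
noncomputable def Fint (f : V → ℝ → ℝ) (x : V) (s : ℝ) : ℝ := ∫ t in (0:ℝ)..s, f x t

/-- The functional `J(u) = (1/2)∫(|∇u|² + h u²) dμ − ∫ F(x,u) dμ`. -/
noncomputable def energy (w : V → V → ℝ) (μ h : V → ℝ) (f : V → ℝ → ℝ) (u : V → ℝ) : ℝ :=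
  (1 / 2) * intV μ (fun x => gradSq w μ u x + h x * u x ^ 2) -
    intV μ (fun x => Fint f x (u x))

/-- The perturbed functional `J_ε(u) = J(u) − ε ∫ g u dμ`. -/
noncomputable def energyP (w : V → V → ℝ) (μ h : V → ℝ) (f : V → ℝ → ℝ) (g : V → ℝ)
    (ε : ℝ) (u : V → ℝ) : ℝ :=
  energy w μ h f u - ε * intV μ (fun x => g x * u x)

/-- Weak convergence `u_k ⇀ u` in the Hilbert space `ℋ`. -/
def weakConvH (w : V → V → ℝ) (μ h : V → ℝ) (uk : ℕ → V → ℝ) (u : V → ℝ) : Prop :=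
  ∀ v : V → ℝ, memH w μ h v →
    Tendsto (fun k => innerH w μ h (uk k) v) atTop (nhds (innerH w μ h u v))

/-- The `L^q(V,μ)` norm for finite `q`. -/
noncomputable def LqNorm (μ : V → ℝ) (q : ℝ) (u : V → ℝ) : ℝ :=
  (intV μ fun x => |u x| ^ q) ^ (1 / q)

/-- The `L^∞(V)` norm `sup_x |u(x)|`. -/
noncomputable def LinfNorm (u : V → ℝ) : ℝ := ⨆ x, |u x|

/-- `g` (viewed via the pairing `u ↦ ∫ g u dμ`) belongs to the dual `ℋ'` of `ℋ`. -/
def memHdual (w : V → V → ℝ) (μ h g : V → ℝ) : Prop :=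
  ∃ C : ℝ, ∀ u : V → ℝ, memH w μ h u →
    Summable (fun x => μ x * (g x * u x)) ∧
    |intV μ fun x => g x * u x| ≤ C * normH w μ h u

/-- `u ∈ ℋ` is a weak solution of `−Δu + hu = f(x,u)`. -/
def weakSol (w : V → V → ℝ) (μ h : V → ℝ) (f : V → ℝ → ℝ) (u : V → ℝ) : Prop :=
  memH w μ h u ∧ ∀ φ : V → ℝ, memH w μ h φ →
    intV μ (fun x => gamma w μ u φ x + h x * u x * φ x) =
      intV μ (fun x => f x (u x) * φ x)

/-- `u ∈ ℋ` is a weak solution of the perturbed equation `−Δu + hu = f(x,u) + εg`. -/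
def weakSolP (w : V → V → ℝ) (μ h : V → ℝ) (f : V → ℝ → ℝ) (g : V → ℝ) (ε : ℝ)
    (u : V → ℝ) : Prop :=
  memH w μ h u ∧ ∀ φ : V → ℝ, memH w μ h φ →
    intV μ (fun x => gamma w μ u φ x + h x * u x * φ x) =
      intV μ (fun x => f x (u x) * φ x) + ε * intV μ (fun x => g x * φ x)

/-- The simple graph underlying the weights `w` (edges where the weight is nonzero). -/
def adjGraph (w : V → V → ℝ) : SimpleGraph V where
  Adj x y := x ≠ y ∧ (w x y ≠ 0 ∨ w y x ≠ 0)
  symm := ⟨fun x y hxy => ⟨hxy.1.symm, hxy.2.symm⟩⟩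
  loopless := ⟨fun x hx => hx.1 rfl⟩



/-!
By the Ambrosetti–Rabinowitz condition, `θ J(uₖ) - J'(uₖ) uₖ ≥ (θ/2 - 1) ‖uₖ‖²`, so a
Palais–Smale sequence is bounded in `ℋ`. As `μ ≥ μmin` and `h ≥ h₀`, the `ℋ`-norm controls the
sup norm, so `f(x, uₖ)` is uniformly bounded by (F1), and since `V` is countable by (H2) a
subsequence converges pointwise, by Tychonoff, to some `u ∈ ℋ`. For `vⱼ = u_{kⱼ} - u`,
`‖vⱼ‖² = (⟨u_{kⱼ}, vⱼ⟩ - ∫ f(u_{kⱼ}) vⱼ) + ∫ f(u_{kⱼ}) vⱼ - ⟨u, vⱼ⟩`. The first term is at most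
`εⱼ ‖vⱼ‖`; the other two vanish because a sequence that is bounded in `ℋ` and pointwise null pairs
to zero with each fixed element of `ℋ` and, thanks to `∫ 1/h dμ < ∞`, with bounded coefficients.
-/

section Series

variable {ι : Type*}

theorem le_max_one_div_of_mul_sq_le {a b c t : ℝ} (ha : 0 < a) (hb : 0 ≤ b)
    (h : a * t ^ 2 ≤ b + c * t) : t ≤ max 1 ((b + c) / a) := by
  rcases le_or_gt t 1 with ht | ht
  · exact ht.trans (le_max_left _ _)
  · refine le_max_of_le_right ((le_div_iff₀ ha).2 ?_)
    nlinarith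

theorem summable_and_tsum_le_of_tendsto {α : Type*} {l : Filter α} [l.NeBot] {g : α → ι → ℝ}
    {G : ι → ℝ} {K : ℝ} (hg0 : ∀ j x, 0 ≤ g j x) (hg : ∀ j, Summable (g j))
    (hK : ∀ j, ∑' x, g j x ≤ K) (hlim : ∀ x, Tendsto (g · x) l (𝓝 (G x))) :
    Summable G ∧ ∑' x, G x ≤ K := by
  have hG0 : ∀ x, 0 ≤ G x := fun x => ge_of_tendsto' (hlim x) (hg0 · x)
  have hsum : ∀ s : Finset ι, ∑ x ∈ s, G x ≤ K := fun s =>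
    le_of_tendsto' (tendsto_finsetSum s fun x _ => hlim x) fun j =>
      ((hg j).sum_le_tsum s fun x _ => hg0 j x).trans (hK j)
  have hGs := summable_of_sum_le hG0 hsum
  exact ⟨hGs, hGs.tsum_le_of_sum_le hsum⟩

theorem abs_tsum_le_tsum_abs {f : ι → ℝ} (h : Summable fun x => |f x|) :
    |∑' x, f x| ≤ ∑' x, |f x| := by
  have := norm_tsum_le_tsum_norm (f := f) (by simpa only [Real.norm_eq_abs] using h)
  simpa only [Real.norm_eq_abs] using this

theorem max_abs_sub_mul_le_div {c d g η : ℝ} (hd : 0 ≤ d) (hg : 0 ≤ g) (hη : 0 < η)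
    (hc : |c| ≤ √d * √g) : max (|c| - η * g) 0 ≤ d / (4 * η) := by
  refine max_le ?_ (by positivity)
  rw [le_div_iff₀ (by positivity)]
  have hamgm := two_mul_le_add_sq √d (2 * η * √g)
  rw [mul_pow, mul_pow, Real.sq_sqrt hd, Real.sq_sqrt hg] at hamgm
  nlinarith [mul_le_mul_of_nonneg_left hc hη.le]

theorem tendsto_tsum_zero_of_abs_le_sqrt_mul_sqrt {α : Type*} {l : Filter α} {c g : α → ι → ℝ}
    {d : ι → ℝ} {K : ℝ} (hd0 : ∀ x, 0 ≤ d x) (hd : Summable d) (hg0 : ∀ j x, 0 ≤ g j x)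
    (hg : ∀ j, Summable (g j)) (hK : ∀ j, ∑' x, g j x ≤ K) (hg_lim : ∀ x, Tendsto (g · x) l (𝓝 0))
    (hcb : ∀ j x, |c j x| ≤ √(d x) * √(g j x)) : Tendsto (fun j => ∑' x, c j x) l (𝓝 0) := by
  refine Metric.tendsto_nhds.2 fun ε hε => ?_
  set η := ε / (2 * (|K| + 1)) with hη_def
  have hη : 0 < η := by positivity
  have hηK : η * K < ε / 2 := by
    rw [hη_def, div_mul_eq_mul_div, div_lt_div_iff₀ (by positivity) two_pos]
    nlinarith [le_abs_self K]
  -- the part of `|c j|` not controlled by `η * g j` is dominated by `d / (4 η)`, so dominated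
  -- convergence applies to it
  set r : α → ι → ℝ := fun j x => max (|c j x| - η * g j x) 0
  have hr_le j x : r j x ≤ d x / (4 * η) := max_abs_sub_mul_le_div (hd0 x) (hg0 j x) hη (hcb j x)
  have hc_lim x : Tendsto (fun j => |c j x|) l (𝓝 0) :=
    squeeze_zero (fun j => abs_nonneg _) (hcb · x)
      (by simpa using ((hg_lim x).sqrt).const_mul √(d x))
  have hr0 : Tendsto (fun j => ∑' x, r j x) l (𝓝 0) := by
    have := tendsto_tsum_of_dominated_convergence (hd.div_const (4 * η))
      (fun x => squeeze_zero (f := fun j => r j x) (fun j => le_max_right _ _)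
        (fun j => max_le (by linarith [mul_nonneg hη.le (hg0 j x)]) (abs_nonneg _)) (hc_lim x))
      (.of_forall fun j x => by
        rw [Real.norm_of_nonneg (le_max_right _ _)]; exact hr_le j x)
    simpa using this
  filter_upwards [Metric.tendsto_nhds.1 hr0 (ε / 2) (half_pos hε)] with j hj
  have hr_sum : Summable (r j) :=
    (hd.div_const (4 * η)).of_nonneg_of_le (fun x => le_max_right _ _) (hr_le j)
  have hc_le : ∀ x, |c j x| ≤ r j x + η * g j x := fun x => by
    linarith [le_max_left (|c j x| - η * g j x) 0]
  have hrg_sum := hr_sum.add ((hg j).mul_left η)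
  have hc_sum : Summable fun x => |c j x| :=
    hrg_sum.of_nonneg_of_le (fun x => abs_nonneg _) hc_le
  rw [Real.dist_eq, sub_zero] at hj ⊢
  calc |∑' x, c j x| ≤ ∑' x, |c j x| := abs_tsum_le_tsum_abs hc_sum
    _ ≤ ∑' x, (r j x + η * g j x) := hc_sum.tsum_le_tsum hc_le hrg_sum
    _ = ∑' x, r j x + η * ∑' x, g j x := by rw [hr_sum.tsum_add ((hg j).mul_left η), tsum_mul_left]
    _ < ε := by
        have := mul_le_mul_of_nonneg_left (hK j) hη.le
        linarith [le_abs_self (∑' x, r j x)]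

theorem summable_of_abs_le_sqrt_mul_sqrt {c d g : ι → ℝ} (hd0 : ∀ x, 0 ≤ d x) (hg0 : ∀ x, 0 ≤ g x)
    (hd : Summable d) (hg : Summable g) (hc : ∀ x, |c x| ≤ √(d x) * √(g x)) : Summable c := by
  refine Summable.of_norm_bounded ((hd.add hg).div_const 2) fun x => (hc x).trans ?_
  have := two_mul_le_add_sq (√(d x)) (√(g x))
  rw [Real.sq_sqrt (hd0 x), Real.sq_sqrt (hg0 x)] at this
  linarith

theorem countable_of_summable_of_ne_zero {f : ι → ℝ} (hf : Summable f) (h0 : ∀ x, f x ≠ 0) :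
    Countable ι := by
  rw [← Set.countable_univ_iff, ← Function.support_eq_univ h0]
  exact hf.countable_support

theorem exists_strictMono_tendsto_pi_of_abs_le [Countable ι] {u : ℕ → ι → ℝ} {M : ℝ}
    (hu : ∀ k x, |u k x| ≤ M) :
    ∃ v : ι → ℝ, ∃ φ : ℕ → ℕ, StrictMono φ ∧ Tendsto (u ∘ φ) atTop (𝓝 v) := by
  obtain ⟨v, -, φ, hφ, hconv⟩ :=
    (isCompact_univ_pi fun _ => isCompact_Icc (a := -M) (b := M)).tendsto_subseq
      fun k => Set.mem_univ_pi.2 fun x => abs_le.1 (hu k x)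
  exact ⟨v, φ, hφ, hconv⟩

end Series

section Densities

variable {w : V → V → ℝ} {μ h : V → ℝ}

noncomputable def normSqDensity (w : V → V → ℝ) (μ h u : V → ℝ) (x : V) : ℝ :=
  μ x * (gradSq w μ u x + h x * u x ^ 2)

noncomputable def innerDensity (w : V → V → ℝ) (μ h u v : V → ℝ) (x : V) : ℝ :=
  μ x * (gamma w μ u v x + h x * u x * v x)

theorem gamma_eq_sum (hlf : ∀ x, {y | w x y ≠ 0}.Finite) (u v : V → ℝ) (x : V) :
    gamma w μ u v x =
      1 / (2 * μ x) * ∑ y ∈ (hlf x).toFinset, w x y * (u y - u x) * (v y - v x) := by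
  rw [gamma, tsum_eq_sum (s := (hlf x).toFinset) fun y hy => ?_]
  simp [show w x y = 0 by simpa using hy]

theorem gamma_self (u : V → ℝ) (x : V) : gamma w μ u u x = gradSq w μ u x := by
  simp only [gamma, gradSq, mul_assoc, sq]

theorem innerDensity_self (u : V → ℝ) : innerDensity w μ h u u = normSqDensity w μ h u := by
  ext x
  rw [innerDensity, normSqDensity, gamma_self]
  ring

theorem innerDensity_sub_left (hlf : ∀ x, {y | w x y ≠ 0}.Finite) (a b c : V → ℝ) (x : V) :
    innerDensity w μ h (fun y => a y - b y) c x =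
      innerDensity w μ h a c x - innerDensity w μ h b c x := by
  simp only [innerDensity, gamma_eq_sum hlf]
  set S := (hlf x).toFinset
  have : ∑ y ∈ S, w x y * (a y - b y - (a x - b x)) * (c y - c x) =
      ∑ y ∈ S, w x y * (a y - a x) * (c y - c x) - ∑ y ∈ S, w x y * (b y - b x) * (c y - c x) := by
    rw [← Finset.sum_sub_distrib]
    exact Finset.sum_congr rfl fun y _ => by ring
  rw [this]
  ring

theorem normSqDensity_add_mul (hlf : ∀ x, {y | w x y ≠ 0}.Finite) (u v : V → ℝ) (t : ℝ) (x : V) :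
    normSqDensity w μ h (fun y => u y + t * v y) x = normSqDensity w μ h u x +
      2 * t * innerDensity w μ h u v x + t ^ 2 * normSqDensity w μ h v x := by
  simp only [normSqDensity, innerDensity, ← gamma_self, gamma_eq_sum hlf]
  set S := (hlf x).toFinset
  have : ∑ y ∈ S, w x y * (u y + t * v y - (u x + t * v x)) * (u y + t * v y - (u x + t * v x)) =
      ∑ y ∈ S, w x y * (u y - u x) * (u y - u x) +
        2 * t * ∑ y ∈ S, w x y * (u y - u x) * (v y - v x) +
        t ^ 2 * ∑ y ∈ S, w x y * (v y - v x) * (v y - v x) := by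
    simp only [Finset.mul_sum, ← Finset.sum_add_distrib]
    exact Finset.sum_congr rfl fun y _ => by ring
  rw [this]
  ring

theorem gradSq_nonneg (hwnn : ∀ x y, 0 ≤ w x y) (hμpos : ∀ x, 0 < μ x) (u : V → ℝ) (x : V) :
    0 ≤ gradSq w μ u x :=
  mul_nonneg (by have := hμpos x; positivity) (tsum_nonneg fun y => by have := hwnn x y; positivity)

theorem mul_sq_le_normSqDensity (hwnn : ∀ x y, 0 ≤ w x y) (hμpos : ∀ x, 0 < μ x) (u : V → ℝ)
    (x : V) : μ x * (h x * u x ^ 2) ≤ normSqDensity w μ h u x := by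
  have := mul_nonneg (hμpos x).le (gradSq_nonneg hwnn hμpos u x)
  rw [normSqDensity]
  linarith

theorem normSqDensity_nonneg (hwnn : ∀ x y, 0 ≤ w x y) (hμpos : ∀ x, 0 < μ x) (hhpos : ∀ x, 0 < h x)
    (u : V → ℝ) (x : V) : 0 ≤ normSqDensity w μ h u x :=
  (mul_nonneg (hμpos x).le (mul_nonneg (hhpos x).le (sq_nonneg _))).trans
    (mul_sq_le_normSqDensity hwnn hμpos u x)

theorem abs_innerDensity_le (hwnn : ∀ x y, 0 ≤ w x y) (hlf : ∀ x, {y | w x y ≠ 0}.Finite)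
    (hμpos : ∀ x, 0 < μ x) (hhpos : ∀ x, 0 < h x) (u v : V → ℝ) (x : V) :
    |innerDensity w μ h u v x| ≤ √(normSqDensity w μ h u x) * √(normSqDensity w μ h v x) := by
  -- the discriminant of the nonnegative quadratic `t ↦ normSqDensity (u + t v) x` is nonpositive
  have hdisc := discrim_le_zero (a := normSqDensity w μ h v x) (b := 2 * innerDensity w μ h u v x)
      (c := normSqDensity w μ h u x) fun t => by
    have := normSqDensity_nonneg hwnn hμpos hhpos (fun y => u y + t * v y) x
    rw [normSqDensity_add_mul hlf] at this
    linarith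
  rw [← Real.sqrt_mul (normSqDensity_nonneg hwnn hμpos hhpos u x)]
  refine Real.abs_le_sqrt ?_
  rw [discrim] at hdisc
  linarith

theorem normSqDensity_sub_le (hwnn : ∀ x y, 0 ≤ w x y) (hlf : ∀ x, {y | w x y ≠ 0}.Finite)
    (hμpos : ∀ x, 0 < μ x) (hhpos : ∀ x, 0 < h x) (a b : V → ℝ) (x : V) :
    normSqDensity w μ h (fun y => a y - b y) x ≤
      2 * normSqDensity w μ h a x + 2 * normSqDensity w μ h b x := by
  have hsub := normSqDensity_add_mul (w := w) (μ := μ) (h := h) hlf a b (-1) x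
  simp only [neg_one_mul, ← sub_eq_add_neg] at hsub
  have hcs := abs_innerDensity_le hwnn hlf hμpos hhpos a b x
  have hamgm := two_mul_le_add_sq (√(normSqDensity w μ h a x)) (√(normSqDensity w μ h b x))
  rw [Real.sq_sqrt (normSqDensity_nonneg hwnn hμpos hhpos a x),
    Real.sq_sqrt (normSqDensity_nonneg hwnn hμpos hhpos b x)] at hamgm
  nlinarith [neg_abs_le (innerDensity w μ h a b x)]

theorem continuous_normSqDensity (hlf : ∀ x, {y | w x y ≠ 0}.Finite) (x : V) :
    Continuous fun u => normSqDensity w μ h u x := by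
  simp only [normSqDensity, ← gamma_self, gamma_eq_sum hlf]
  fun_prop

end Densities

section SpaceH

variable {w : V → V → ℝ} {μ h : V → ℝ}

theorem memH_iff_summable (hwnn : ∀ x y, 0 ≤ w x y) (hμpos : ∀ x, 0 < μ x)
    (hhpos : ∀ x, 0 < h x) {u : V → ℝ} :
    memH w μ h u ↔ Summable (normSqDensity w μ h u) := by
  have hgrad x : 0 ≤ μ x * gradSq w μ u x := mul_nonneg (hμpos x).le (gradSq_nonneg hwnn hμpos u x)
  have hpot x : 0 ≤ μ x * (h x * u x ^ 2) :=
    mul_nonneg (hμpos x).le (mul_nonneg (hhpos x).le (sq_nonneg _))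
  refine ⟨fun hu => (hu.1.add hu.2).congr fun x => (mul_add _ _ _).symm, fun hu =>
    ⟨hu.of_nonneg_of_le hgrad fun x => ?_,
      hu.of_nonneg_of_le hpot (mul_sq_le_normSqDensity hwnn hμpos u)⟩⟩
  rw [normSqDensity, mul_add]
  linarith [hpot x]

theorem normH_sq (hwnn : ∀ x y, 0 ≤ w x y) (hμpos : ∀ x, 0 < μ x) (hhpos : ∀ x, 0 < h x)
    (u : V → ℝ) : normH w μ h u ^ 2 = ∑' x, normSqDensity w μ h u x :=
  Real.sq_sqrt (tsum_nonneg (normSqDensity_nonneg hwnn hμpos hhpos u))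

theorem innerH_self (hwnn : ∀ x y, 0 ≤ w x y) (hμpos : ∀ x, 0 < μ x) (hhpos : ∀ x, 0 < h x)
    (u : V → ℝ) : innerH w μ h u u = normH w μ h u ^ 2 := by
  rw [normH_sq hwnn hμpos hhpos, ← innerDensity_self]
  rfl

theorem tsum_normSqDensity_le (hwnn : ∀ x y, 0 ≤ w x y) (hμpos : ∀ x, 0 < μ x)
    (hhpos : ∀ x, 0 < h x) {u : V → ℝ} {B : ℝ} (hB : normH w μ h u ≤ B) :
    ∑' x, normSqDensity w μ h u x ≤ B ^ 2 := by
  rw [← normH_sq hwnn hμpos hhpos]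
  exact pow_le_pow_left₀ (Real.sqrt_nonneg _) hB 2

theorem summable_innerDensity (hwnn : ∀ x y, 0 ≤ w x y) (hlf : ∀ x, {y | w x y ≠ 0}.Finite)
    (hμpos : ∀ x, 0 < μ x) (hhpos : ∀ x, 0 < h x) {u v : V → ℝ} (hu : memH w μ h u)
    (hv : memH w μ h v) : Summable (innerDensity w μ h u v) :=
  summable_of_abs_le_sqrt_mul_sqrt (normSqDensity_nonneg hwnn hμpos hhpos u)
    (normSqDensity_nonneg hwnn hμpos hhpos v) ((memH_iff_summable hwnn hμpos hhpos).1 hu)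
    ((memH_iff_summable hwnn hμpos hhpos).1 hv) (abs_innerDensity_le hwnn hlf hμpos hhpos u v)

theorem innerH_sub_left (hwnn : ∀ x y, 0 ≤ w x y) (hlf : ∀ x, {y | w x y ≠ 0}.Finite)
    (hμpos : ∀ x, 0 < μ x) (hhpos : ∀ x, 0 < h x) {a b c : V → ℝ} (ha : memH w μ h a)
    (hb : memH w μ h b) (hc : memH w μ h c) :
    innerH w μ h (fun y => a y - b y) c = innerH w μ h a c - innerH w μ h b c := by
  change ∑' x, innerDensity w μ h _ c x =
    ∑' x, innerDensity w μ h a c x - ∑' x, innerDensity w μ h b c x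
  rw [tsum_congr (innerDensity_sub_left hlf a b c)]
  exact (summable_innerDensity hwnn hlf hμpos hhpos ha hc).tsum_sub
    (summable_innerDensity hwnn hlf hμpos hhpos hb hc)

theorem memH_sub (hwnn : ∀ x y, 0 ≤ w x y) (hlf : ∀ x, {y | w x y ≠ 0}.Finite)
    (hμpos : ∀ x, 0 < μ x) (hhpos : ∀ x, 0 < h x) {a b : V → ℝ} (ha : memH w μ h a)
    (hb : memH w μ h b) : memH w μ h (fun y => a y - b y) := by
  rw [memH_iff_summable hwnn hμpos hhpos] at ha hb ⊢
  exact ((ha.mul_left 2).add (hb.mul_left 2)).of_nonneg_of_le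
    (normSqDensity_nonneg hwnn hμpos hhpos _) (normSqDensity_sub_le hwnn hlf hμpos hhpos a b)

theorem normH_sub_sq_le (hwnn : ∀ x y, 0 ≤ w x y) (hlf : ∀ x, {y | w x y ≠ 0}.Finite)
    (hμpos : ∀ x, 0 < μ x) (hhpos : ∀ x, 0 < h x) {a b : V → ℝ} (ha : memH w μ h a)
    (hb : memH w μ h b) :
    normH w μ h (fun y => a y - b y) ^ 2 ≤ 2 * normH w μ h a ^ 2 + 2 * normH w μ h b ^ 2 := by
  have hsum := ((memH_iff_summable hwnn hμpos hhpos).1 ha).mul_left 2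
  have hsum' := ((memH_iff_summable hwnn hμpos hhpos).1 hb).mul_left 2
  simp only [normH_sq hwnn hμpos hhpos, ← tsum_mul_left]
  rw [← hsum.tsum_add hsum']
  exact ((memH_iff_summable hwnn hμpos hhpos).1 (memH_sub hwnn hlf hμpos hhpos ha hb)).tsum_le_tsum
    (normSqDensity_sub_le hwnn hlf hμpos hhpos a b) (hsum.add hsum')

theorem mul_abs_le_sqrt_mul_sqrt (hwnn : ∀ x y, 0 ≤ w x y) (hμpos : ∀ x, 0 < μ x)
    (hhpos : ∀ x, 0 < h x) (u : V → ℝ) (x : V) :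
    μ x * |u x| ≤ √(μ x * (1 / h x)) * √(normSqDensity w μ h u x) := by
  have hμh : 0 ≤ μ x * (1 / h x) := by have := hμpos x; have := hhpos x; positivity
  calc μ x * |u x| = √((μ x * u x) ^ 2) := by
        rw [Real.sqrt_sq_eq_abs, abs_mul, abs_of_pos (hμpos x)]
    _ = √(μ x * (1 / h x)) * √(μ x * (h x * u x ^ 2)) := by
        rw [← Real.sqrt_mul hμh]
        congr 1
        field_simp [(hhpos x).ne']
    _ ≤ √(μ x * (1 / h x)) * √(normSqDensity w μ h u x) := by
        gcongr
        exact mul_sq_le_normSqDensity hwnn hμpos u x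

theorem abs_le_of_normH_le (hwnn : ∀ x y, 0 ≤ w x y) {μmin h₀ : ℝ} (hμmin : 0 < μmin)
    (hμ : ∀ x, μmin ≤ μ x) (hh₀ : 0 < h₀) (hH1 : ∀ x, h₀ ≤ h x) {u : V → ℝ}
    (hu : memH w μ h u) {B : ℝ} (hB : normH w μ h u ≤ B) (x : V) :
    |u x| ≤ B / √(μmin * h₀) := by
  have hμpos x : 0 < μ x := hμmin.trans_le (hμ x)
  have hhpos x : 0 < h x := hh₀.trans_le (hH1 x)
  have hpt : μmin * h₀ * u x ^ 2 ≤ B ^ 2 :=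
    calc μmin * h₀ * u x ^ 2 ≤ μ x * (h x * u x ^ 2) := by
          rw [mul_assoc]; gcongr
          · exact (hμpos x).le
          · exact hμ x
          · exact hH1 x
      _ ≤ normSqDensity w μ h u x := mul_sq_le_normSqDensity hwnn hμpos u x
      _ ≤ ∑' y, normSqDensity w μ h u y :=
          ((memH_iff_summable hwnn hμpos hhpos).1 hu).le_tsum x fun y _ =>
            normSqDensity_nonneg hwnn hμpos hhpos u y
      _ ≤ B ^ 2 := tsum_normSqDensity_le hwnn hμpos hhpos hB
  rw [le_div_iff₀ (by positivity), ← Real.sqrt_sq_eq_abs, ← Real.sqrt_mul (sq_nonneg _),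
    Real.sqrt_le_left ((Real.sqrt_nonneg _).trans hB)]
  linarith

theorem memH_and_normH_le_of_tendsto (hwnn : ∀ x y, 0 ≤ w x y) (hlf : ∀ x, {y | w x y ≠ 0}.Finite)
    (hμpos : ∀ x, 0 < μ x) (hhpos : ∀ x, 0 < h x) {a : ℕ → V → ℝ} {u : V → ℝ} {B : ℝ}
    (ha : ∀ j, memH w μ h (a j)) (hB : ∀ j, normH w μ h (a j) ≤ B)
    (hconv : Tendsto a atTop (𝓝 u)) : memH w μ h u ∧ normH w μ h u ≤ B := by
  obtain ⟨hsum, hle⟩ := summable_and_tsum_le_of_tendsto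
    (fun j => normSqDensity_nonneg hwnn hμpos hhpos (a j))
    (fun j => (memH_iff_summable hwnn hμpos hhpos).1 (ha j))
    (fun j => tsum_normSqDensity_le hwnn hμpos hhpos (hB j))
    fun x => ((continuous_normSqDensity hlf x).tendsto u).comp hconv
  exact ⟨(memH_iff_summable hwnn hμpos hhpos).2 hsum,
    (Real.sqrt_le_left ((Real.sqrt_nonneg _).trans (hB 0))).2 hle⟩

end SpaceH

section Convergence

variable {w : V → V → ℝ} {μ h : V → ℝ} {α : Type*} {l : Filter α}

theorem tendsto_normSqDensity_zero (hlf : ∀ x, {y | w x y ≠ 0}.Finite) {v : α → V → ℝ}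
    (hv0 : Tendsto v l (𝓝 0)) (x : V) : Tendsto (fun j => normSqDensity w μ h (v j) x) l (𝓝 0) := by
  have h0 : normSqDensity w μ h 0 x = 0 := by simp [normSqDensity, gradSq]
  have := ((continuous_normSqDensity (μ := μ) (h := h) hlf x).tendsto 0).comp hv0
  rwa [h0] at this

theorem tendsto_innerH_zero_of_tendsto_pi (hwnn : ∀ x y, 0 ≤ w x y)
    (hlf : ∀ x, {y | w x y ≠ 0}.Finite) (hμpos : ∀ x, 0 < μ x) (hhpos : ∀ x, 0 < h x)
    {u : V → ℝ} {v : α → V → ℝ} {B : ℝ} (hu : memH w μ h u) (hv : ∀ j, memH w μ h (v j))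
    (hvB : ∀ j, normH w μ h (v j) ≤ B) (hv0 : Tendsto v l (𝓝 0)) :
    Tendsto (fun j => innerH w μ h u (v j)) l (𝓝 0) :=
  tendsto_tsum_zero_of_abs_le_sqrt_mul_sqrt (c := fun j => innerDensity w μ h u (v j))
    (normSqDensity_nonneg hwnn hμpos hhpos u) ((memH_iff_summable hwnn hμpos hhpos).1 hu)
    (fun j => normSqDensity_nonneg hwnn hμpos hhpos (v j))
    (fun j => (memH_iff_summable hwnn hμpos hhpos).1 (hv j))
    (fun j => tsum_normSqDensity_le hwnn hμpos hhpos (hvB j)) (tendsto_normSqDensity_zero hlf hv0)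
    (fun j => abs_innerDensity_le hwnn hlf hμpos hhpos u (v j))

theorem abs_mul_mul_le_sqrt_mul_sqrt (hwnn : ∀ x y, 0 ≤ w x y) (hμpos : ∀ x, 0 < μ x)
    (hhpos : ∀ x, 0 < h x) {g v : V → ℝ} {A : ℝ} (hgA : ∀ x, |g x| ≤ A) (x : V) :
    |μ x * (g x * v x)| ≤ √(A ^ 2 * (μ x * (1 / h x))) * √(normSqDensity w μ h v x) := by
  rw [Real.sqrt_mul (sq_nonneg A), Real.sqrt_sq_eq_abs, mul_assoc, abs_mul, abs_mul,
    abs_of_pos (hμpos x), mul_left_comm]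
  exact mul_le_mul ((hgA x).trans (le_abs_self A)) (mul_abs_le_sqrt_mul_sqrt hwnn hμpos hhpos v x)
    (mul_nonneg (hμpos x).le (abs_nonneg _)) (abs_nonneg A)

theorem summable_mul_mul_of_abs_le (hwnn : ∀ x y, 0 ≤ w x y) (hμpos : ∀ x, 0 < μ x)
    (hhpos : ∀ x, 0 < h x) (hH2 : Summable fun x => μ x * (1 / h x)) {g v : V → ℝ} {A : ℝ}
    (hgA : ∀ x, |g x| ≤ A) (hv : memH w μ h v) : Summable fun x => μ x * (g x * v x) :=
  summable_of_abs_le_sqrt_mul_sqrt (fun x => by have := hμpos x; have := hhpos x; positivity)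
    (normSqDensity_nonneg hwnn hμpos hhpos v) (hH2.mul_left _)
    ((memH_iff_summable hwnn hμpos hhpos).1 hv) (abs_mul_mul_le_sqrt_mul_sqrt hwnn hμpos hhpos hgA)

theorem tendsto_intV_mul_zero_of_tendsto_pi (hwnn : ∀ x y, 0 ≤ w x y)
    (hlf : ∀ x, {y | w x y ≠ 0}.Finite) (hμpos : ∀ x, 0 < μ x) (hhpos : ∀ x, 0 < h x)
    (hH2 : Summable fun x => μ x * (1 / h x)) {g v : α → V → ℝ} {A B : ℝ}
    (hgA : ∀ j x, |g j x| ≤ A) (hv : ∀ j, memH w μ h (v j)) (hvB : ∀ j, normH w μ h (v j) ≤ B)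
    (hv0 : Tendsto v l (𝓝 0)) : Tendsto (fun j => intV μ fun x => g j x * v j x) l (𝓝 0) :=
  tendsto_tsum_zero_of_abs_le_sqrt_mul_sqrt
    (fun x => by have := hμpos x; have := hhpos x; positivity) (hH2.mul_left (A ^ 2))
    (fun j => normSqDensity_nonneg hwnn hμpos hhpos (v j))
    (fun j => (memH_iff_summable hwnn hμpos hhpos).1 (hv j))
    (fun j => tsum_normSqDensity_le hwnn hμpos hhpos (hvB j)) (tendsto_normSqDensity_zero hlf hv0)
    (fun j => abs_mul_mul_le_sqrt_mul_sqrt hwnn hμpos hhpos (hgA j))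

theorem tendsto_normH_sub_of_tendsto_pi (hwnn : ∀ x y, 0 ≤ w x y)
    (hlf : ∀ x, {y | w x y ≠ 0}.Finite) (hμpos : ∀ x, 0 < μ x) (hhpos : ∀ x, 0 < h x)
    (hH2 : Summable fun x => μ x * (1 / h x)) {f : V → ℝ → ℝ} {a : α → V → ℝ} {u : V → ℝ}
    {ε : α → ℝ} {A B : ℝ} (ha : ∀ j, memH w μ h (a j)) (hu : memH w μ h u)
    (haB : ∀ j, normH w μ h (a j) ≤ B) (huB : normH w μ h u ≤ B) (hconv : Tendsto a l (𝓝 u))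
    (hfA : ∀ j x, |f x (a j x)| ≤ A) (hε : Tendsto ε l (𝓝 0))
    (hPS : ∀ j φ, memH w μ h φ →
      |innerH w μ h (a j) φ - intV μ fun x => f x (a j x) * φ x| ≤ ε j * normH w μ h φ) :
    Tendsto (fun j => normH w μ h fun x => a j x - u x) l (𝓝 0) := by
  set v : α → V → ℝ := fun j x => a j x - u x
  have hv j : memH w μ h (v j) := memH_sub hwnn hlf hμpos hhpos (ha j) hu
  have hvB j : normH w μ h (v j) ≤ 2 * B := by
    have := normH_sub_sq_le hwnn hlf hμpos hhpos (ha j) hu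
    have hvn : 0 ≤ normH w μ h (v j) := Real.sqrt_nonneg _
    have han : 0 ≤ normH w μ h (a j) := Real.sqrt_nonneg _
    have hun : 0 ≤ normH w μ h u := Real.sqrt_nonneg _
    nlinarith [haB j]
  have hv0 : Tendsto v l (𝓝 0) := by
    have := hconv.sub_const u
    rwa [sub_self] at this
  have hsplit j : normH w μ h (v j) ^ 2 =
      (innerH w μ h (a j) (v j) - intV μ fun x => f x (a j x) * v j x) +
        (intV μ fun x => f x (a j x) * v j x) - innerH w μ h u (v j) := by
    rw [← innerH_self hwnn hμpos hhpos, innerH_sub_left hwnn hlf hμpos hhpos (ha j) hu (hv j)]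
    ring
  have hPS0 : Tendsto (fun j => innerH w μ h (a j) (v j) - intV μ fun x => f x (a j x) * v j x)
      l (𝓝 0) := by
    refine squeeze_zero_norm (fun j => (hPS j (v j) (hv j)).trans ?_)
      (by simpa using hε.abs.mul_const (2 * B))
    exact mul_le_mul (le_abs_self _) (hvB j) (Real.sqrt_nonneg _) (abs_nonneg _)
  have hsq := (hPS0.add (tendsto_intV_mul_zero_of_tendsto_pi hwnn hlf hμpos hhpos hH2 hfA hv hvB
    hv0)).sub (tendsto_innerH_zero_of_tendsto_pi hwnn hlf hμpos hhpos hu hv hvB hv0)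
  rw [add_zero, sub_zero, ← tendsto_congr hsplit] at hsq
  have := hsq.sqrt
  rw [Real.sqrt_zero] at this
  exact this.congr fun j => Real.sqrt_sq (Real.sqrt_nonneg _)

end Convergence

section Nonlinearity

variable {f : V → ℝ → ℝ} {θ : ℝ}

theorem Fint_eq_zero_of_nonpos (hfneg : ∀ x, ∀ s : ℝ, s ≤ 0 → f x s = 0) (x : V) {s : ℝ}
    (hs : s ≤ 0) : Fint f x s = 0 := by
  rw [Fint, intervalIntegral.integral_congr (g := fun _ => 0) fun t ht =>
    hfneg x t (Set.uIcc_of_ge hs ▸ ht).2]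
  simp

theorem f_nonneg (hAR : ∀ x, ∀ s : ℝ, 0 < s → 0 < θ * Fint f x s ∧ θ * Fint f x s ≤ s * f x s)
    (hfneg : ∀ x, ∀ s : ℝ, s ≤ 0 → f x s = 0) (x : V) (s : ℝ) : 0 ≤ f x s := by
  rcases le_or_gt s 0 with hs | hs
  · exact (hfneg x s hs).ge
  · exact (pos_of_mul_pos_right ((hAR x s hs).1.trans_le (hAR x s hs).2) hs.le).le

theorem Fint_nonneg (hθ : 0 < θ)
    (hAR : ∀ x, ∀ s : ℝ, 0 < s → 0 < θ * Fint f x s ∧ θ * Fint f x s ≤ s * f x s)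
    (hfneg : ∀ x, ∀ s : ℝ, s ≤ 0 → f x s = 0) (x : V) (s : ℝ) : 0 ≤ Fint f x s := by
  rcases le_or_gt s 0 with hs | hs
  · exact (Fint_eq_zero_of_nonpos hfneg x hs).ge
  · exact (pos_of_mul_pos_right (hAR x s hs).1 hθ.le).le

theorem mul_Fint_le (hAR : ∀ x, ∀ s : ℝ, 0 < s → 0 < θ * Fint f x s ∧ θ * Fint f x s ≤ s * f x s)
    (hfneg : ∀ x, ∀ s : ℝ, s ≤ 0 → f x s = 0) (x : V) (s : ℝ) : θ * Fint f x s ≤ s * f x s := by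
  rcases le_or_gt s 0 with hs | hs
  · simp [Fint_eq_zero_of_nonpos hfneg x hs, hfneg x s hs]
  · exact (hAR x s hs).2

theorem exists_abs_f_le (hF1b : ∀ M : ℝ, 0 < M → ∃ A : ℝ, ∀ x, ∀ s ∈ Set.Icc (0:ℝ) M, f x s ≤ A)
    (hf0 : ∀ x s, 0 ≤ f x s) (hfneg : ∀ x, ∀ s : ℝ, s ≤ 0 → f x s = 0) (M : ℝ) :
    ∃ A, ∀ x s, |s| ≤ M → |f x s| ≤ A := by
  obtain ⟨A, hA⟩ := hF1b (max M 1) (by positivity)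
  refine ⟨max A 0, fun x s hs => ?_⟩
  rw [abs_of_nonneg (hf0 x s)]
  rcases le_or_gt s 0 with hs0 | hs0
  · exact (hfneg x s hs0).trans_le (le_max_right _ _)
  · exact (hA x s ⟨hs0.le, (le_abs_self s).trans (hs.trans (le_max_left _ _))⟩).trans
      (le_max_left _ _)

end Nonlinearity

section PalaisSmale

variable {w : V → V → ℝ} {μ h : V → ℝ} {f : V → ℝ → ℝ}

theorem exists_abs_f_le_of_normH_le (hwnn : ∀ x y, 0 ≤ w x y) {μmin h₀ : ℝ} (hμmin : 0 < μmin)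
    (hμ : ∀ x, μmin ≤ μ x) (hh₀ : 0 < h₀) (hH1 : ∀ x, h₀ ≤ h x)
    (hF1b : ∀ M : ℝ, 0 < M → ∃ A : ℝ, ∀ x, ∀ s ∈ Set.Icc (0:ℝ) M, f x s ≤ A)
    (hf0 : ∀ x s, 0 ≤ f x s) (hfneg : ∀ x, ∀ s : ℝ, s ≤ 0 → f x s = 0) (B : ℝ) :
    ∃ A, ∀ u, memH w μ h u → normH w μ h u ≤ B → ∀ x, |f x (u x)| ≤ A :=
  (exists_abs_f_le hF1b hf0 hfneg (B / √(μmin * h₀))).imp fun _ hA _ hu hB x =>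
    hA x _ (abs_le_of_normH_le hwnn hμmin hμ hh₀ hH1 hu hB x)

theorem normH_le_of_energy_le (hwnn : ∀ x y, 0 ≤ w x y) (hμpos : ∀ x, 0 < μ x)
    (hhpos : ∀ x, 0 < h x) {θ C D ε : ℝ} (hθ : 2 < θ) (hFnn : ∀ x s, 0 ≤ Fint f x s)
    (hθF : ∀ x s, θ * Fint f x s ≤ s * f x s) {u : V → ℝ}
    (hsum : Summable fun x => μ x * (f x (u x) * u x)) (hD : 0 ≤ D)
    (hJ : energy w μ h f u ≤ D) (hεC : ε ≤ C)
    (hPS : |innerH w μ h u u - intV μ fun x => f x (u x) * u x| ≤ ε * normH w μ h u) :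
    normH w μ h u ≤ max 1 ((θ * D + C) / (θ / 2 - 1)) := by
  have hθ0 : 0 < θ := by linarith
  have ht : 0 ≤ normH w μ h u := Real.sqrt_nonneg _
  have hΦ : θ * intV μ (fun x => Fint f x (u x)) ≤ intV μ fun x => f x (u x) * u x := by
    have hle x : θ * (μ x * Fint f x (u x)) ≤ μ x * (f x (u x) * u x) := by
      rw [mul_left_comm, mul_comm (f x (u x))]
      exact mul_le_mul_of_nonneg_left (hθF x (u x)) (hμpos x).le
    rw [intV, intV, ← tsum_mul_left]
    exact (hsum.of_nonneg_of_le (fun x => mul_nonneg hθ0.le (mul_nonneg (hμpos x).le (hFnn x _)))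
      hle).tsum_le_tsum hle hsum
  have hE : energy w μ h f u = normH w μ h u ^ 2 / 2 - intV μ (fun x => Fint f x (u x)) := by
    rw [normH_sq hwnn hμpos hhpos, energy]
    unfold intV normSqDensity
    ring
  rw [innerH_self hwnn hμpos hhpos] at hPS
  refine le_max_one_div_of_mul_sq_le (by linarith) (by positivity) ?_
  nlinarith [(abs_le.1 hPS).1, mul_le_mul_of_nonneg_right hεC ht,
    mul_le_mul_of_nonneg_left hJ hθ0.le]

end PalaisSmale

theorem palais_smale_condition_general
    (w : V → V → ℝ) (hwnn : ∀ x y, 0 ≤ w x y)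
    (hlf : ∀ x : V, {y | w x y ≠ 0}.Finite)
    (μ : V → ℝ) (μmin : ℝ) (hμmin : 0 < μmin) (hμ : ∀ x, μmin ≤ μ x)
    (h : V → ℝ) (h₀ : ℝ) (hh₀ : 0 < h₀) (hH1 : ∀ x, h₀ ≤ h x)
    (hH2 : Summable fun x => μ x * (1 / h x))
    (f : V → ℝ → ℝ)
    (hF1b : ∀ M : ℝ, 0 < M → ∃ A : ℝ, ∀ x, ∀ s ∈ Set.Icc (0:ℝ) M, f x s ≤ A)
    (hF2 : ∃ θ : ℝ, 2 < θ ∧ ∀ x, ∀ s : ℝ, 0 < s →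
      0 < θ * Fint f x s ∧ θ * Fint f x s ≤ s * f x s)
    (hfneg : ∀ x, ∀ s : ℝ, s ≤ 0 → f x s = 0) :
    ∀ c : ℝ, ∀ uk : ℕ → V → ℝ, (∀ k, memH w μ h (uk k)) →
      Tendsto (fun k => energy w μ h f (uk k)) atTop (nhds c) →
      (∃ εk : ℕ → ℝ, Tendsto εk atTop (nhds 0) ∧
        ∀ k, ∀ φ : V → ℝ, memH w μ h φ →
          |innerH w μ h (uk k) φ - intV μ fun x => f x (uk k x) * φ x| ≤
            εk k * normH w μ h φ) →
      ∃ u : V → ℝ, memH w μ h u ∧ ∃ φ : ℕ → ℕ, StrictMono φ ∧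
        Tendsto (fun j => normH w μ h fun x => uk (φ j) x - u x) atTop (nhds 0) := by
  intro c uk hmem hJ ⟨ε, hε, hPS⟩
  obtain ⟨θ, hθ, hAR⟩ := hF2
  have hμpos x : 0 < μ x := hμmin.trans_le (hμ x)
  have hhpos x : 0 < h x := hh₀.trans_le (hH1 x)
  have hfA := exists_abs_f_le_of_normH_le hwnn hμmin hμ hh₀ hH1 hF1b (f_nonneg hAR hfneg) hfneg
  obtain ⟨D, hD⟩ := hJ.bddAbove_range
  obtain ⟨C, hC⟩ := hε.bddAbove_range
  set B := max 1 ((θ * max D 0 + max C 0) / (θ / 2 - 1))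
  have hB k : normH w μ h (uk k) ≤ B := by
    obtain ⟨A, hA⟩ := hfA (normH w μ h (uk k))
    exact normH_le_of_energy_le hwnn hμpos hhpos hθ (Fint_nonneg (by linarith) hAR hfneg)
      (mul_Fint_le hAR hfneg)
      (summable_mul_mul_of_abs_le hwnn hμpos hhpos hH2 (hA _ (hmem k) le_rfl) (hmem k))
      (le_max_right _ _) ((hD ⟨k, rfl⟩).trans (le_max_left _ _))
      ((hC ⟨k, rfl⟩).trans (le_max_left _ _)) (hPS k _ (hmem k))
  obtain ⟨A, hA⟩ := hfA B
  have : Countable V := countable_of_summable_of_ne_zero hH2 fun x =>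
    (mul_pos (hμpos x) (one_div_pos.2 (hhpos x))).ne'
  obtain ⟨u, φ, hφ, hconv⟩ := exists_strictMono_tendsto_pi_of_abs_le
    fun k => abs_le_of_normH_le hwnn hμmin hμ hh₀ hH1 (hmem k) (hB k)
  obtain ⟨hu, huB⟩ := memH_and_normH_le_of_tendsto hwnn hlf hμpos hhpos (fun j => hmem (φ j))
    (fun j => hB (φ j)) hconv
  exact ⟨u, hu, φ, hφ, tendsto_normH_sub_of_tendsto_pi hwnn hlf hμpos hhpos hH2
    (fun j => hmem (φ j)) hu (fun j => hB (φ j)) huB hconv (fun j => hA _ (hmem _) (hB _))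
    (hε.comp hφ.tendsto_atTop) fun j => hPS (φ j)⟩

theorem palais_smale_condition
    (w : V → V → ℝ) (hsymm : ∀ x y, w x y = w y x) (hwnn : ∀ x y, 0 ≤ w x y)
    (hlf : ∀ x : V, {y | w x y ≠ 0}.Finite)
    (μ : V → ℝ) (μmin : ℝ) (hμmin : 0 < μmin) (hμ : ∀ x, μmin ≤ μ x)
    (h : V → ℝ) (h₀ : ℝ) (hh₀ : 0 < h₀) (hH1 : ∀ x, h₀ ≤ h x)
    (hH2 : Summable fun x => μ x * (1 / h x))
    (f : V → ℝ → ℝ)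
    (hF1c : ∀ x, Continuous (f x)) (hF10 : ∀ x, f x 0 = 0)
    (hF1b : ∀ M : ℝ, 0 < M → ∃ A : ℝ, ∀ x, ∀ s ∈ Set.Icc (0:ℝ) M, f x s ≤ A)
    (hF2 : ∃ θ : ℝ, 2 < θ ∧ ∀ x, ∀ s : ℝ, 0 < s →
      0 < θ * Fint f x s ∧ θ * Fint f x s ≤ s * f x s)
    (hfneg : ∀ x, ∀ s : ℝ, s ≤ 0 → f x s = 0) :
    ∀ c : ℝ, ∀ uk : ℕ → V → ℝ, (∀ k, memH w μ h (uk k)) →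
      Tendsto (fun k => energy w μ h f (uk k)) atTop (nhds c) →
      (∃ εk : ℕ → ℝ, Tendsto εk atTop (nhds 0) ∧
        ∀ k, ∀ φ : V → ℝ, memH w μ h φ →
          |innerH w μ h (uk k) φ - intV μ fun x => f x (uk k x) * φ x| ≤
            εk k * normH w μ h φ) →
      ∃ u : V → ℝ, memH w μ h u ∧ ∃ φ : ℕ → ℕ, StrictMono φ ∧
        Tendsto (fun j => normH w μ h fun x => uk (φ j) x - u x) atTop (nhds 0) :=
  palais_smale_condition_general w hwnn hlf μ μmin hμmin hμ h h₀ hh₀ hH1 hH2 f hF1b hF2 hfneg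

end GraphNLE
end

section
/- Let G=(V,E) be a locally finite graph with symmetric positive edge weights and measure μ:V→(0,∞), let h satisfy (H1), let f satisfy (F2) with f(x,s)=0 for s ≤ 0, let g ∈ ℋ', and let ε > 0. Then there exists u ∈ ℋ such that J_ε(tu) → −∞ as t → +∞, where J_ε(u) = (1/2)‖u‖_ℋ² − ∫_V F(x,u)dμ − ε∫_V gu dμ. -/
open Filter Topology

namespace GraphNLE

variable {V : Type*}

/-! Take for `u` the indicator of a single vertex `x₀`; it lies in `ℋ` because only finitely
many edges meet `x₀`. Along the ray `t u` the energy is `A t² − μ(x₀) F(x₀,t) − B t`. The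
Ambrosetti–Rabinowitz condition `θ F ≤ s f` turns `F(s) − F(1) = ∫₁ˢ f` into the integral
inequality `F(s) ≥ F(1) + θ ∫₁ˢ F(u)/u du`, whence `F(s) ≥ F(1) sᶿ` by a Grönwall argument;
as `θ > 2`, the term `μ(x₀) F(x₀,t)` beats the quadratic one. -/

section Growth

open Set MeasureTheory intervalIntegral

theorem mul_rpow_le_of_le_add_integral {Φ : ℝ → ℝ} {θ a s : ℝ} (ha : 0 < a) (hθ : 0 ≤ θ)
    (hΦ : ContinuousOn Φ (Ioi 0))
    (hle : ∀ s, a ≤ s → Φ a + θ * ∫ u in a..s, Φ u / u ≤ Φ s) (hs : a ≤ s) :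
    Φ a / a ^ θ * s ^ θ ≤ Φ s := by
  set G : ℝ → ℝ := fun s => ∫ u in a..s, Φ u / u
  have hquot : ContinuousOn (fun u => Φ u / u) (Ioi 0) :=
    hΦ.div continuousOn_id fun u hu => ne_of_gt hu
  have hG : ∀ s, 0 < s → HasDerivAt G (Φ s / s) s := fun s hs =>
    integral_hasDerivAt_right
      (hquot.mono fun u hu => lt_of_lt_of_le (lt_min ha hs) hu.1).intervalIntegrable
      (hquot.stronglyMeasurableAtFilter isOpen_Ioi s hs)
      (hquot.continuousAt (Ioi_mem_nhds hs))
  -- `y = Φ a + θ G` satisfies `s y' = θ Φ ≥ θ y`, so `y / s ^ θ` increases.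
  set H : ℝ → ℝ := fun s => (Φ a + θ * G s) * s ^ (-θ)
  have hH : ∀ s, 0 < s → HasDerivAt H (θ * s ^ (-θ - 1) * (Φ s - (Φ a + θ * G s))) s := by
    intro s hs
    refine ((((hG s hs).const_mul θ).const_add (Φ a)).mul
      (Real.hasDerivAt_rpow_const (p := -θ) (Or.inl hs.ne'))).congr_deriv ?_
    rw [Real.rpow_sub_one hs.ne']
    field_simp
    ring
  have hmono : MonotoneOn H (Ici a) := by
    refine monotoneOn_of_hasDerivWithinAt_nonneg
      (f' := fun s => θ * s ^ (-θ - 1) * (Φ s - (Φ a + θ * G s))) (convex_Ici a)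
      (fun s hs => (hH s (ha.trans_le hs)).continuousAt.continuousWithinAt)
      (fun s hs => ?_) (fun s hs => ?_) <;> rw [interior_Ici] at hs
    · exact (hH s (ha.trans hs)).hasDerivWithinAt
    · exact mul_nonneg (mul_nonneg hθ (Real.rpow_nonneg (ha.trans hs).le _))
        (sub_nonneg.2 (hle s hs.le))
  calc Φ a / a ^ θ * s ^ θ = H a * s ^ θ := by
        simp [H, G, Real.rpow_neg ha.le, div_eq_mul_inv]
    _ ≤ H s * s ^ θ :=
        mul_le_mul_of_nonneg_right (hmono self_mem_Ici hs hs)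
          (Real.rpow_nonneg (ha.le.trans hs) θ)
    _ = Φ a + θ * G s := by
        simp only [H]
        rw [mul_assoc, ← Real.rpow_add (ha.trans_le hs), neg_add_cancel, Real.rpow_zero, mul_one]
    _ ≤ Φ s := hle s hs

theorem primitive_mul_rpow_le_of_ambrosettiRabinowitz {f : ℝ → ℝ} {θ s : ℝ} (hθ : 0 < θ)
    (hAR : ∀ s, 0 < s → 0 < θ * ∫ t in 0..s, f t ∧ θ * ∫ t in 0..s, f t ≤ s * f s)
    (hs : 1 ≤ s) :
    (∫ t in 0..1, f t) * s ^ θ ≤ ∫ t in 0..s, f t := by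
  set Φ : ℝ → ℝ := fun s => ∫ t in 0..s, f t
  have hf_int : ∀ s, 0 < s → IntervalIntegrable f volume 0 s := fun s hs => by
    by_contra hf
    have := (hAR s hs).1
    simp [integral_undef hf] at this
  have hf_int' : ∀ a b, 0 < a → 0 < b → IntervalIntegrable f volume a b := fun a b ha hb =>
    (hf_int a ha).symm.trans (hf_int b hb)
  have hcont : ContinuousOn Φ (Ioi 0) := fun s (hs : 0 < s) => by
    refine ((continuousOn_primitive_interval' (hf_int (s + 1) (by linarith))
      left_mem_uIcc).continuousAt ?_).continuousWithinAt
    rw [uIcc_of_le (by linarith)]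
    exact Icc_mem_nhds hs (by linarith)
  have hle : ∀ s, 1 ≤ s → Φ 1 + θ * ∫ u in 1..s, Φ u / u ≤ Φ s := fun s hs => by
    have hpos : ∀ u ∈ uIcc 1 s, 0 < u := fun u hu => by
      rw [uIcc_of_le hs] at hu; linarith [hu.1]
    have hsplit : Φ s = Φ 1 + ∫ u in 1..s, f u :=
      (integral_add_adjacent_intervals (hf_int 1 one_pos) (hf_int' 1 s one_pos (by linarith))).symm
    have hAR_div : ∀ u ∈ Icc 1 s, θ * (Φ u / u) ≤ f u := fun u hu => by
      have hu : 0 < u := by linarith [hu.1]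
      rw [mul_div_assoc', div_le_iff₀ hu, mul_comm (f u)]
      exact (hAR u hu).2
    rw [hsplit, ← intervalIntegral.integral_const_mul]
    gcongr
    exact integral_mono_on hs
      (continuousOn_const.mul ((hcont.mono fun u hu => hpos u hu).div continuousOn_id
        fun u hu => (hpos u hu).ne')).intervalIntegrable
      (hf_int' 1 s one_pos (by linarith)) hAR_div
  simpa using mul_rpow_le_of_le_add_integral one_pos hθ.le hcont hle hs

theorem tendsto_div_sq_atTop_of_mul_rpow_le {Φ : ℝ → ℝ} {c θ : ℝ} (hc : 0 < c) (hθ : 2 < θ)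
    (hΦ : ∀ s, 1 ≤ s → c * s ^ θ ≤ Φ s) : Tendsto (fun s => Φ s / s ^ 2) atTop atTop := by
  refine tendsto_atTop_mono' atTop ?_
    ((tendsto_rpow_atTop (sub_pos.2 hθ)).const_mul_atTop hc)
  filter_upwards [eventually_ge_atTop 1] with s hs
  have hs0 : 0 < s := by linarith
  rw [Real.rpow_sub hs0, Real.rpow_two, mul_div_assoc', div_le_div_iff_of_pos_right (by positivity)]
  exact hΦ s hs

theorem tendsto_quadratic_sub_atBot {Φ : ℝ → ℝ} (hΦ : Tendsto (fun t => Φ t / t ^ 2) atTop atTop)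
    (A M B : ℝ) (hM : 0 < M) : Tendsto (fun t => A * t ^ 2 - M * Φ t - B * t) atTop atBot := by
  have hinner : Tendsto (fun t => A - B / t + -(M * (Φ t / t ^ 2))) atTop atBot :=
    (tendsto_const_nhds.sub (tendsto_const_nhds.div_atTop tendsto_id)).add_atBot
      (tendsto_neg_atTop_atBot.comp (hΦ.const_mul_atTop hM))
  refine ((tendsto_pow_atTop two_ne_zero).atTop_mul_atBot₀ hinner).congr' ?_
  filter_upwards [eventually_gt_atTop 0] with t ht
  field_simp
  ring

end Growth

theorem intV_const_mul (μ g : V → ℝ) (c : ℝ) : intV μ (fun x => c * g x) = c * intV μ g := by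
  simp only [intV, mul_left_comm (μ _) c, tsum_mul_left]

theorem intV_eq_single {μ g : V → ℝ} (x₀ : V) (hg : ∀ x, x ≠ x₀ → g x = 0) :
    intV μ g = μ x₀ * g x₀ :=
  tsum_eq_single x₀ fun x hx => by rw [hg x hx, mul_zero]

theorem gradSq_const_mul (w : V → V → ℝ) (μ u : V → ℝ) (t : ℝ) (x : V) :
    gradSq w μ (fun y => t * u y) x = t ^ 2 * gradSq w μ u x := by
  simp only [gradSq, ← mul_sub, mul_pow, mul_left_comm (w x _), tsum_mul_left]
  ring

theorem energyP_const_mul (w : V → V → ℝ) (μ h : V → ℝ) (f : V → ℝ → ℝ) (g : V → ℝ)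
    (ε : ℝ) (u : V → ℝ) (t : ℝ) :
    energyP w μ h f g ε (fun x => t * u x) =
      1 / 2 * intV μ (fun x => gradSq w μ u x + h x * u x ^ 2) * t ^ 2 -
        intV μ (fun x => Fint f x (t * u x)) - ε * intV μ (fun x => g x * u x) * t := by
  simp only [energyP, energy, gradSq_const_mul, mul_pow, mul_left_comm (h _), ← mul_add,
    mul_left_comm (g _) t, intV_const_mul]
  ring

theorem memH_single [DecidableEq V] {w : V → V → ℝ} (hsymm : ∀ x y, w x y = w y x)
    (hlf : ∀ x : V, {y | w x y ≠ 0}.Finite) (μ h : V → ℝ) (x₀ : V) :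
    memH w μ h (Pi.single x₀ 1) := by
  set u : V → ℝ := Pi.single x₀ 1
  have hu : ∀ x, x ≠ x₀ → u x = 0 := fun x hx => Pi.single_eq_of_ne hx 1
  have hgrad : ∀ x, x ≠ x₀ → w x₀ x = 0 → gradSq w μ u x = 0 := by
    intro x hx hw
    suffices ∀ y, w x y * (u y - u x) ^ 2 = 0 by
      simp only [gradSq, this, tsum_zero, mul_zero]
    intro y
    rcases eq_or_ne y x₀ with rfl | hy
    · simp [hsymm x, hw]
    · simp [hu x hx, hu y hy]
  refine ⟨summable_of_hasFiniteSupport (((hlf x₀).insert x₀).subset ?_),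
    summable_of_hasFiniteSupport ((Set.finite_singleton x₀).subset ?_)⟩ <;>
    rw [Function.support_subset_iff'] <;> intro x hx
  · simp only [Set.mem_insert_iff, Set.mem_ofPred_eq, not_or, not_not] at hx
    rw [hgrad x hx.1 hx.2, mul_zero]
  · simp [hu x hx]

theorem perturbed_energy_unbounded_below_general [Nonempty V]
    (w : V → V → ℝ) (hsymm : ∀ x y, w x y = w y x)
    (hlf : ∀ x : V, {y | w x y ≠ 0}.Finite)
    (μ : V → ℝ) (hμ : ∀ x, 0 < μ x)
    (h : V → ℝ)
    (f : V → ℝ → ℝ)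
    (hF2 : ∃ θ : ℝ, 2 < θ ∧ ∀ x, ∀ s : ℝ, 0 < s →
      0 < θ * Fint f x s ∧ θ * Fint f x s ≤ s * f x s)
    (g : V → ℝ)
    (ε : ℝ) :
    ∃ u : V → ℝ, memH w μ h u ∧
      Tendsto (fun t : ℝ => energyP w μ h f g ε fun x => t * u x) atTop atBot := by
  classical
  obtain ⟨x₀⟩ := ‹Nonempty V›
  obtain ⟨θ, hθ, hAR⟩ := hF2
  set u : V → ℝ := Pi.single x₀ 1
  have hu₀ : u x₀ = 1 := Pi.single_eq_same x₀ 1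
  have hu : ∀ x, x ≠ x₀ → u x = 0 := fun x hx => Pi.single_eq_of_ne hx 1
  have hF : ∀ t, intV μ (fun x => Fint f x (t * u x)) = μ x₀ * Fint f x₀ t := fun t => by
    rw [intV_eq_single x₀ fun x hx => by simp [hu x hx, Fint], hu₀, mul_one]
  have hg : intV μ (fun x => g x * u x) = μ x₀ * g x₀ := by
    rw [intV_eq_single x₀ fun x hx => by simp [hu x hx], hu₀, mul_one]
  have hgrowth : Tendsto (fun s => Fint f x₀ s / s ^ 2) atTop atTop :=
    tendsto_div_sq_atTop_of_mul_rpow_le (pos_of_mul_pos_right (hAR x₀ 1 one_pos).1 (by linarith))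
      hθ fun s hs => primitive_mul_rpow_le_of_ambrosettiRabinowitz (by linarith) (hAR x₀) hs
  refine ⟨u, memH_single hsymm hlf μ h x₀, ?_⟩
  refine (tendsto_quadratic_sub_atBot hgrowth
    (1 / 2 * intV μ (fun x => gradSq w μ u x + h x * u x ^ 2)) (μ x₀) (ε * (μ x₀ * g x₀))
    (hμ x₀)).congr fun t => ?_
  rw [energyP_const_mul, hF, hg]

theorem perturbed_energy_unbounded_below [Nonempty V]
    (w : V → V → ℝ) (hsymm : ∀ x y, w x y = w y x) (hwnn : ∀ x y, 0 ≤ w x y)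
    (hlf : ∀ x : V, {y | w x y ≠ 0}.Finite)
    (μ : V → ℝ) (hμ : ∀ x, 0 < μ x)
    (h : V → ℝ) (h₀ : ℝ) (hh₀ : 0 < h₀) (hH1 : ∀ x, h₀ ≤ h x)
    (f : V → ℝ → ℝ)
    (hF2 : ∃ θ : ℝ, 2 < θ ∧ ∀ x, ∀ s : ℝ, 0 < s →
      0 < θ * Fint f x s ∧ θ * Fint f x s ≤ s * f x s)
    (hfneg : ∀ x, ∀ s : ℝ, s ≤ 0 → f x s = 0)
    (g : V → ℝ) (hgdual : memHdual w μ h g)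
    (ε : ℝ) (hε : 0 < ε) :
    ∃ u : V → ℝ, memH w μ h u ∧
      Tendsto (fun t : ℝ => energyP w μ h f g ε fun x => t * u x) atTop atBot :=
  perturbed_energy_unbounded_below_general w hsymm hlf μ hμ h f hF2 g ε

end GraphNLE
end
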